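/- Let D be the derivation of ℚ[x,y,z] with D(x)=xyz, D(y)=yz², D(z)=y²z. For every n ≥ 0, D^n(z) = z · Σ_{σ ∈ Q_n} y^{2·lap(σ)} z^{2n − 2·lap(σ)}, an identity in ℚ[x,y,z]. -/

import Mathlib

open Finset MvPolynomial

/-- Stirling permutations of order `n`, encoded as functions `Fin (2*n) → Fin (n+1)`
in one-line notation (position `i` holds the letter `σ (i) ∈ {1,…,n}`), such that each
letter `1,…,n` occurs exactly twice and all entries between the two occurrences of a
letter are larger than that letter. -/
def StirlingSet (n : ℕ) : Finset (Fin (2*n) → Fin (n+1)) :=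
  Finset.univ.filter (fun σ =>
    (∀ v : Fin (n+1), (v : ℕ) ≠ 0 →
        (Finset.univ.filter (fun i => σ i = v)).card = 2) ∧
    (∀ i j k : Fin (2*n), i < j → j < k → σ i = σ k → σ i < σ j))

/-- The letter at position `i ∈ {1,…,2n}` of a Stirling permutation, with the
convention that positions outside this range (in particular position `0`) hold `0`. -/
def sval {n : ℕ} (σ : Fin (2*n) → Fin (n+1)) (i : ℕ) : ℕ :=
  if h : 1 ≤ i ∧ i ≤ 2*n then (σ ⟨i - 1, by omega⟩ : ℕ) else 0

/-- The number of ascent-plateaus: indices `2 ≤ i ≤ 2n-1` with `σ_{i-1} < σ_i = σ_{i+1}`. -/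
def apQ {n : ℕ} (σ : Fin (2*n) → Fin (n+1)) : ℕ :=
  ((Finset.Icc 2 (2*n - 1)).filter
    (fun i => sval σ (i-1) < sval σ i ∧ sval σ i = sval σ (i+1))).card

/-- The number of left ascent-plateaus: indices `1 ≤ i ≤ 2n-1` with
`σ_{i-1} < σ_i = σ_{i+1}`, where `σ_0 = 0`. -/
def lapQ {n : ℕ} (σ : Fin (2*n) → Fin (n+1)) : ℕ :=
  ((Finset.Icc 1 (2*n - 1)).filter
    (fun i => sval σ (i-1) < sval σ i ∧ sval σ i = sval σ (i+1))).card

/-- The number of double ascents: indices `1 ≤ i ≤ 2n-1` with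
`σ_{i-1} < σ_i < σ_{i+1}`, where `σ_0 = 0`. -/
def dascQ {n : ℕ} (σ : Fin (2*n) → Fin (n+1)) : ℕ :=
  ((Finset.Icc 1 (2*n - 1)).filter
    (fun i => sval σ (i-1) < sval σ i ∧ sval σ i < sval σ (i+1))).card

/-- The number of descent-plateaus: indices `2 ≤ i ≤ 2n-1` with
`σ_{i-1} > σ_i = σ_{i+1}`. -/
def dpQ {n : ℕ} (σ : Fin (2*n) → Fin (n+1)) : ℕ :=
  ((Finset.Icc 2 (2*n - 1)).filter
    (fun i => sval σ i < sval σ (i-1) ∧ sval σ i = sval σ (i+1))).card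

/-- The number of ascents: indices `1 ≤ i ≤ 2n-1` with `σ_i < σ_{i+1}` or `i = 1`. -/
def ascQ {n : ℕ} (σ : Fin (2*n) → Fin (n+1)) : ℕ :=
  ((Finset.Icc 1 (2*n - 1)).filter
    (fun i => sval σ i < sval σ (i+1) ∨ i = 1)).card

/-- The number of plateaus: indices `1 ≤ i ≤ 2n-1` with `σ_i = σ_{i+1}`. -/
def platQ {n : ℕ} (σ : Fin (2*n) → Fin (n+1)) : ℕ :=
  ((Finset.Icc 1 (2*n - 1)).filter (fun i => sval σ i = sval σ (i+1))).card

/-- The flag ascent-plateau number: `2·ap(σ)+1` if `σ_1 = σ_2`, and `2·ap(σ)` otherwise. -/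
def fapQ {n : ℕ} (σ : Fin (2*n) → Fin (n+1)) : ℕ :=
  if 1 ≤ n ∧ sval σ 1 = sval σ 2 then 2 * apQ σ + 1 else 2 * apQ σ


/-!
Deleting the two adjacent copies of the largest letter `n + 1` from a Stirling permutation of
order `n + 1` leaves one of order `n`, and conversely each `σ ∈ Q_n` yields one permutation of
order `n + 1` for each of its `2n + 1` gaps. Inserting `(n+1)(n+1)` always creates a left
ascent-plateau, and destroys one exactly when the gap lies inside or just before a left
ascent-plateau of `σ`; there are `2 lap(σ)` such gaps. With `k = lap(σ)` this is the recursion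
`D (y^{2k} z^{2n+1-2k}) = 2k y^{2k} z^{2n+3-2k} + (2n+1-2k) y^{2k+2} z^{2n+1-2k}`, so by induction
`D^n z = ∑_{σ ∈ Q_n} y^{2 lap σ} z^{2n+1-2 lap σ}`.
-/

def shiftFrom (g i : ℕ) : ℕ := if i < g then i else i + 2

lemma shiftFrom_eq_iff {g i j : ℕ} :
    shiftFrom g j = i ↔ (j < g ∧ i = j) ∨ (g ≤ j ∧ i = j + 2) := by
  unfold shiftFrom; split_ifs <;> omega

lemma shiftFrom_ne_gap {g j : ℕ} : ¬(shiftFrom g j = g ∨ shiftFrom g j = g + 1) := by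
  unfold shiftFrom; split_ifs <;> omega

lemma strictMono_shiftFrom (g : ℕ) : StrictMono (shiftFrom g) := by
  intro a b h; unfold shiftFrom; split_ifs <;> omega

def gapEmbedding (g m : ℕ) : Fin m ↪o Fin (m + 2) :=
  OrderEmbedding.ofStrictMono
    (fun j => ⟨shiftFrom g j, by unfold shiftFrom; split_ifs <;> omega⟩)
    fun _ _ h => strictMono_shiftFrom g h

@[simp]
lemma coe_gapEmbedding (g m : ℕ) (j : Fin m) : (gapEmbedding g m j : ℕ) = shiftFrom g j := rfl

lemma exists_gapEmbedding_eq {g m : ℕ} (hg : g ≤ m) {i : Fin (m + 2)}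
    (hi : (i : ℕ) ≠ g ∧ (i : ℕ) ≠ g + 1) : ∃ j, gapEmbedding g m j = i := by
  by_cases h : (i : ℕ) < g
  · exact ⟨⟨i, by omega⟩, Fin.ext (shiftFrom_eq_iff.2 (Or.inl ⟨h, rfl⟩))⟩
  · refine ⟨⟨i - 2, by omega⟩, Fin.ext (shiftFrom_eq_iff.2 (Or.inr ⟨?_, ?_⟩))⟩ <;>
      dsimp only <;> omega

structure IsInsertion {n : ℕ} (g : ℕ) (σ : Fin (2 * n) → Fin (n + 1))
    (τ : Fin (2 * (n + 1)) → Fin (n + 2)) : Prop where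
  gap_le : g ≤ 2 * n
  apply_gapEmbedding : ∀ j, τ (gapEmbedding g (2 * n) j) = (σ j).castSucc
  eq_last_iff : ∀ i, τ i = Fin.last (n + 1) ↔ (i : ℕ) = g ∨ (i : ℕ) = g + 1

noncomputable def insertLast {n : ℕ} (σ : Fin (2 * n) → Fin (n + 1)) (g : ℕ) :
    Fin (2 * (n + 1)) → Fin (n + 2) :=
  Function.extend (gapEmbedding g (2 * n)) (Fin.castSucc ∘ σ) fun _ => Fin.last (n + 1)

lemma isInsertion_insertLast {n g : ℕ} (σ : Fin (2 * n) → Fin (n + 1)) (hg : g ≤ 2 * n) :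
    IsInsertion g σ (insertLast σ g) where
  gap_le := hg
  apply_gapEmbedding j := (gapEmbedding g (2 * n)).injective.extend_apply _ _ j
  eq_last_iff i := by
    by_cases hi : (i : ℕ) = g ∨ (i : ℕ) = g + 1
    · refine iff_of_true (Function.extend_apply' _ _ _ ?_) hi
      rintro ⟨j, rfl⟩
      exact shiftFrom_ne_gap hi
    · obtain ⟨j, rfl⟩ := exists_gapEmbedding_eq hg (not_or.1 hi)
      refine iff_of_false ?_ hi
      rw [insertLast, (gapEmbedding g (2 * n)).injective.extend_apply]
      exact (Fin.castSucc_lt_last _).ne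

lemma mem_stirlingSet {n : ℕ} {σ : Fin (2 * n) → Fin (n + 1)} :
    σ ∈ StirlingSet n ↔
      (∀ v : Fin (n + 1), (v : ℕ) ≠ 0 → (univ.filter fun i => σ i = v).card = 2) ∧
      ∀ i j k : Fin (2 * n), i < j → j < k → σ i = σ k → σ i < σ j := by
  simp [StirlingSet]

namespace IsInsertion

variable {n g : ℕ} {σ : Fin (2 * n) → Fin (n + 1)} {τ : Fin (2 * (n + 1)) → Fin (n + 2)}

lemma exists_gapEmbedding_eq (h : IsInsertion g σ τ) {i : Fin (2 * (n + 1))}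
    (hi : τ i ≠ Fin.last (n + 1)) : ∃ j, gapEmbedding g (2 * n) j = i :=
  _root_.exists_gapEmbedding_eq h.gap_le (not_or.1 (mt (h.eq_last_iff i).2 hi))

lemma eq_insertLast (h : IsInsertion g σ τ) : τ = insertLast σ g := by
  have h' := isInsertion_insertLast σ h.gap_le
  funext i
  by_cases hi : τ i = Fin.last (n + 1)
  · rw [hi, eq_comm, h'.eq_last_iff, ← h.eq_last_iff, hi]
  · obtain ⟨j, rfl⟩ := h.exists_gapEmbedding_eq hi
    rw [h.apply_gapEmbedding, h'.apply_gapEmbedding]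

lemma unique {g' : ℕ} {σ' : Fin (2 * n) → Fin (n + 1)} (h : IsInsertion g σ τ)
    (h' : IsInsertion g' σ' τ) : g = g' ∧ σ = σ' := by
  have hg : g = g' := by
    have h1 := (h'.eq_last_iff ⟨g, by have := h.gap_le; omega⟩).1
      ((h.eq_last_iff _).2 (Or.inl rfl))
    have h2 := (h.eq_last_iff ⟨g', by have := h'.gap_le; omega⟩).1
      ((h'.eq_last_iff _).2 (Or.inl rfl))
    simp only at h1 h2
    omega
  subst hg
  refine ⟨rfl, funext fun j => Fin.castSucc_injective _ ?_⟩
  rw [← h.apply_gapEmbedding, ← h'.apply_gapEmbedding]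

lemma filter_eq_castSucc (h : IsInsertion g σ τ) (v : Fin (n + 1)) :
    (univ.filter fun i => τ i = v.castSucc) =
      (univ.filter fun j => σ j = v).map (gapEmbedding g (2 * n)).toEmbedding := by
  ext i
  simp only [mem_filter, mem_univ, true_and, mem_map, RelEmbedding.coe_toEmbedding]
  constructor
  · intro hi
    obtain ⟨j, rfl⟩ := h.exists_gapEmbedding_eq (hi ▸ (Fin.castSucc_lt_last v).ne)
    exact ⟨j, Fin.castSucc_injective _ (h.apply_gapEmbedding j ▸ hi), rfl⟩
  · rintro ⟨j, rfl, rfl⟩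
    exact h.apply_gapEmbedding j

lemma card_filter_eq_last (h : IsInsertion g σ τ) :
    (univ.filter fun i => τ i = Fin.last (n + 1)).card = 2 := by
  have hg := h.gap_le
  rw [card_eq_two]
  refine ⟨⟨g, by omega⟩, ⟨g + 1, by omega⟩, by simp [Fin.ext_iff], ?_⟩
  ext i
  simp [h.eq_last_iff, Fin.ext_iff]

lemma occursTwice_iff (h : IsInsertion g σ τ) :
    (∀ v : Fin (n + 1), (v : ℕ) ≠ 0 → (univ.filter fun j => σ j = v).card = 2) ↔
      ∀ w : Fin (n + 2), (w : ℕ) ≠ 0 → (univ.filter fun i => τ i = w).card = 2 := by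
  constructor
  · intro hσ w hw
    induction w using Fin.lastCases with
    | last => exact h.card_filter_eq_last
    | cast v => rw [h.filter_eq_castSucc, card_map]; exact hσ v hw
  · intro hτ v hv
    simpa [h.filter_eq_castSucc] using hτ v.castSucc hv

lemma nested_iff (h : IsInsertion g σ τ) :
    (∀ i j k : Fin (2 * n), i < j → j < k → σ i = σ k → σ i < σ j) ↔
      ∀ i j k : Fin (2 * (n + 1)), i < j → j < k → τ i = τ k → τ i < τ j := by
  set e := gapEmbedding g (2 * n)
  constructor
  · intro hσ i j k hij hjk hik
    by_cases hi : τ i = Fin.last (n + 1)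
    · have hk := (h.eq_last_iff k).1 (hik ▸ hi)
      have := (h.eq_last_iff i).1 hi
      rw [Fin.lt_def] at hij hjk
      omega
    obtain ⟨i, rfl⟩ := h.exists_gapEmbedding_eq hi
    obtain ⟨k, rfl⟩ := h.exists_gapEmbedding_eq (hik ▸ hi)
    by_cases hj : τ j = Fin.last (n + 1)
    · rw [hj, Fin.lt_last_iff_ne_last]; exact hi
    obtain ⟨j, rfl⟩ := h.exists_gapEmbedding_eq hj
    rw [h.apply_gapEmbedding, h.apply_gapEmbedding] at hik ⊢
    rw [Fin.castSucc_lt_castSucc_iff]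
    exact hσ i j k (e.lt_iff_lt.1 hij) (e.lt_iff_lt.1 hjk) (Fin.castSucc_injective _ hik)
  · intro hτ i j k hij hjk hik
    have := hτ (e i) (e j) (e k) (e.lt_iff_lt.2 hij) (e.lt_iff_lt.2 hjk)
      (by rw [h.apply_gapEmbedding, h.apply_gapEmbedding, hik])
    rwa [h.apply_gapEmbedding, h.apply_gapEmbedding, Fin.castSucc_lt_castSucc_iff] at this

lemma mem_stirlingSet_iff (h : IsInsertion g σ τ) :
    σ ∈ StirlingSet n ↔ τ ∈ StirlingSet (n + 1) := by
  rw [mem_stirlingSet, mem_stirlingSet, h.occursTwice_iff, h.nested_iff]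

end IsInsertion

section Removal

variable {n : ℕ} {τ : Fin (2 * (n + 1)) → Fin (n + 2)}

lemma exists_adjacent_last (hτ : τ ∈ StirlingSet (n + 1)) :
    ∃ g ≤ 2 * n, ∀ i, τ i = Fin.last (n + 1) ↔ (i : ℕ) = g ∨ (i : ℕ) = g + 1 := by
  obtain ⟨hcount, hnested⟩ := mem_stirlingSet.1 hτ
  obtain ⟨a, b, hab, hset⟩ := card_eq_two.1 (hcount (Fin.last (n + 1)) (by simp))
  have hmem : ∀ i, τ i = Fin.last (n + 1) ↔ i = a ∨ i = b := fun i => by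
    simpa using congrArg (i ∈ ·) hset
  wlog hlt : a < b generalizing a b
  · exact this b a hab.symm (by rw [hset, pair_comm]) (fun i => (hmem i).trans or_comm)
      (lt_of_le_of_ne (not_lt.1 hlt) hab.symm)
  -- the entry between two copies of the largest letter would have to exceed it
  have hb : (b : ℕ) = a + 1 := by
    by_contra hb
    have hlt' := Fin.lt_def.1 hlt
    have ha := (hmem a).2 (Or.inl rfl)
    have := hnested a ⟨a + 1, by omega⟩ b (Fin.lt_def.2 (by dsimp only; omega))
      (Fin.lt_def.2 (by dsimp only; omega)) (ha.trans ((hmem b).2 (Or.inr rfl)).symm)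
    exact not_lt.2 (Fin.le_last _) (ha ▸ this)
  refine ⟨a, by have := b.isLt; omega, fun i => (hmem i).trans ?_⟩
  simp [Fin.ext_iff, hb]

lemma exists_isInsertion (hτ : τ ∈ StirlingSet (n + 1)) :
    ∃ g σ, IsInsertion g σ τ := by
  obtain ⟨g, hg, hlast⟩ := exists_adjacent_last hτ
  have hne : ∀ j, τ (gapEmbedding g (2 * n) j) ≠ Fin.last (n + 1) := fun j hj => by
    have := (hlast _).1 hj
    simp only [coe_gapEmbedding] at this
    exact shiftFrom_ne_gap this
  exact ⟨g, fun j => (τ _).castPred (hne j), hg, fun j => Fin.castSucc_castPred _ (hne j),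
    hlast⟩

end Removal

lemma sum_stirlingSet_succ {M : Type*} [AddCommMonoid M] (n : ℕ)
    (f : (Fin (2 * (n + 1)) → Fin (n + 2)) → M) :
    ∑ τ ∈ StirlingSet (n + 1), f τ =
      ∑ σ ∈ StirlingSet n, ∑ g ∈ range (2 * n + 1), f (insertLast σ g) := by
  rw [← sum_product']
  symm
  refine sum_nbij (fun p => insertLast p.1 p.2) ?_ ?_ ?_ fun _ _ => rfl
  · rintro ⟨σ, g⟩ hp
    rw [mem_product, mem_range] at hp
    exact (isInsertion_insertLast σ (by omega)).mem_stirlingSet_iff.1 hp.1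
  · rintro ⟨σ, g⟩ hp ⟨σ', g'⟩ hp' heq
    simp only [mem_coe, mem_product, mem_range] at hp hp' heq
    have h' := isInsertion_insertLast σ' (by omega : g' ≤ 2 * n)
    rw [← heq] at h'
    obtain ⟨rfl, rfl⟩ := (isInsertion_insertLast σ (by omega)).unique h'
    rfl
  · intro τ hτ
    obtain ⟨g, σ, h⟩ := exists_isInsertion hτ
    refine ⟨(σ, g), ?_, h.eq_insertLast.symm⟩
    rw [mem_coe, mem_product, mem_range]
    exact ⟨h.mem_stirlingSet_iff.2 hτ, by have := h.gap_le; omega⟩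

section Letters

variable {n : ℕ} (σ : Fin (2 * n) → Fin (n + 1))

lemma sval_le (i : ℕ) : sval σ i ≤ n := by
  unfold sval
  split
  · exact Nat.lt_succ_iff.1 (Fin.isLt _)
  · exact Nat.zero_le n

lemma sval_succ (p : Fin (2 * n)) : sval σ (p + 1) = σ p := by
  simp [sval]

lemma sval_eq_zero {i : ℕ} (h : i = 0 ∨ 2 * n < i) : sval σ i = 0 := by
  unfold sval
  rw [dif_neg (by omega)]

lemma one_le_and_le_of_sval_ne_zero {i : ℕ} (h : sval σ i ≠ 0) : 1 ≤ i ∧ i ≤ 2 * n := by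
  by_contra h'
  exact h (sval_eq_zero σ (by omega))

end Letters

lemma IsInsertion.sval_eq {n g : ℕ} {σ : Fin (2 * n) → Fin (n + 1)}
    {τ : Fin (2 * (n + 1)) → Fin (n + 2)} (h : IsInsertion g σ τ) (i : ℕ) :
    sval τ i = if i ≤ g then sval σ i else if i ≤ g + 2 then n + 1 else sval σ (i - 2) := by
  have hg := h.gap_le
  obtain rfl | ⟨p, rfl⟩ : i = 0 ∨ ∃ p, i = p + 1 := by cases i <;> simp
  · simp [sval_eq_zero]
  by_cases hp : p < 2 * (n + 1)
  swap
  · rw [sval_eq_zero _ (by omega), if_neg (by omega), if_neg (by omega), sval_eq_zero _ (by omega)]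
  obtain ⟨q, rfl⟩ : ∃ q : Fin (2 * (n + 1)), (q : ℕ) = p := ⟨⟨p, hp⟩, rfl⟩
  rw [sval_succ]
  by_cases hlast : τ q = Fin.last (n + 1)
  · have := (h.eq_last_iff q).1 hlast
    rw [hlast, if_neg (by omega), if_pos (by omega), Fin.val_last]
  obtain ⟨j, rfl⟩ := h.exists_gapEmbedding_eq hlast
  rw [h.apply_gapEmbedding, Fin.val_castSucc, coe_gapEmbedding, shiftFrom]
  split_ifs <;> first | omega | simp [sval_succ]

section Laps

variable {n : ℕ}

def IsLap (σ : Fin (2 * n) → Fin (n + 1)) (i : ℕ) : Prop :=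
  sval σ (i - 1) < sval σ i ∧ sval σ i = sval σ (i + 1)

instance (σ : Fin (2 * n) → Fin (n + 1)) : DecidablePred (IsLap σ) :=
  fun _ => inferInstanceAs (Decidable (_ ∧ _))

def lapSet (σ : Fin (2 * n) → Fin (n + 1)) : Finset ℕ :=
  (Icc 1 (2 * n - 1)).filter (IsLap σ)

variable {σ : Fin (2 * n) → Fin (n + 1)}

lemma lapQ_eq_card_lapSet : lapQ σ = (lapSet σ).card := rfl

lemma IsLap.one_le_and_lt {i : ℕ} (h : IsLap σ i) : 1 ≤ i ∧ i < 2 * n := by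
  have h1 := one_le_and_le_of_sval_ne_zero σ (i := i) (by have := h.1; omega)
  have h2 := one_le_and_le_of_sval_ne_zero σ (i := i + 1) (by have := h.1; have := h.2; omega)
  omega

lemma mem_lapSet {i : ℕ} : i ∈ lapSet σ ↔ IsLap σ i := by
  simp only [lapSet, mem_filter, mem_Icc, and_iff_right_iff_imp]
  intro h
  have := h.one_le_and_lt
  omega

lemma IsLap.not_isLap_succ {i : ℕ} (h : IsLap σ i) : ¬IsLap σ (i + 1) := fun h' => by
  have := h'.1
  simp only [Nat.add_sub_cancel] at this
  exact this.ne h.2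

end Laps

namespace IsInsertion

variable {n g : ℕ} {σ : Fin (2 * n) → Fin (n + 1)} {τ : Fin (2 * (n + 1)) → Fin (n + 2)}

lemma isLap_iff (h : IsInsertion g σ τ) (i : ℕ) :
    IsLap τ i ↔ (i < g ∧ IsLap σ i) ∨ i = g + 1 ∨ (g + 4 ≤ i ∧ IsLap σ (i - 2)) := by
  simp only [IsLap, h.sval_eq]
  by_cases hi : i ≤ g + 3
  · have := sval_le σ i
    have := sval_le σ (i - 1)
    have := sval_le σ (i + 1 - 2)
    split_ifs <;> omega
  · rw [show i - 1 - 2 = i - 2 - 1 by omega, show i + 1 - 2 = i - 2 + 1 by omega]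
    split_ifs <;> omega

lemma lapSet_eq (h : IsInsertion g σ τ) :
    lapSet τ = insert (g + 1) ((lapSet σ \ {g, g + 1}).image (shiftFrom g)) := by
  ext i
  simp only [mem_insert, mem_image, mem_sdiff, mem_lapSet, mem_singleton, shiftFrom_eq_iff,
    h.isLap_iff]
  constructor
  · rintro (⟨hi, hl⟩ | rfl | ⟨hi, hl⟩)
    · exact Or.inr ⟨i, ⟨hl, by omega⟩, Or.inl ⟨hi, rfl⟩⟩
    · exact Or.inl rfl
    · exact Or.inr ⟨i - 2, ⟨hl, by omega⟩, Or.inr ⟨by omega, by omega⟩⟩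
  · rintro (rfl | ⟨j, ⟨hl, hj⟩, ⟨hjg, rfl⟩ | ⟨hjg, rfl⟩⟩)
    · exact Or.inr (Or.inl rfl)
    · exact Or.inl ⟨hjg, hl⟩
    · exact Or.inr (Or.inr ⟨by omega, by simpa using hl⟩)

end IsInsertion

lemma card_lapSet_inter_pair {n : ℕ} (σ : Fin (2 * n) → Fin (n + 1)) (g : ℕ) :
    (lapSet σ ∩ {g, g + 1}).card = if g ∈ lapSet σ ∨ g + 1 ∈ lapSet σ then 1 else 0 := by
  by_cases h : g ∈ lapSet σ
  · have h' : g + 1 ∉ lapSet σ := by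
      rw [mem_lapSet] at h ⊢
      exact h.not_isLap_succ
    simp [h, h', inter_insert_of_mem]
  · by_cases h' : g + 1 ∈ lapSet σ <;> simp [h, h']

lemma IsInsertion.lapQ_add_ite {n g : ℕ} {σ : Fin (2 * n) → Fin (n + 1)}
    {τ : Fin (2 * (n + 1)) → Fin (n + 2)} (h : IsInsertion g σ τ) :
    lapQ τ + (if g ∈ lapSet σ ∨ g + 1 ∈ lapSet σ then 1 else 0) = lapQ σ + 1 := by
  have hnotMem : g + 1 ∉ (lapSet σ \ {g, g + 1}).image (shiftFrom g) := by
    simp only [mem_image, not_exists, not_and]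
    exact fun j _ hj => shiftFrom_ne_gap (Or.inr hj)
  rw [lapQ_eq_card_lapSet, lapQ_eq_card_lapSet, h.lapSet_eq, card_insert_of_notMem hnotMem,
    card_image_of_injective _ (strictMono_shiftFrom g).injective, ← card_lapSet_inter_pair,
    ← card_sdiff_add_card_inter (lapSet σ) {g, g + 1}]
  ring

lemma card_filter_mem_lapSet_or_succ_mem {n : ℕ} (σ : Fin (2 * n) → Fin (n + 1)) :
    ((range (2 * n + 1)).filter fun g => g ∈ lapSet σ ∨ g + 1 ∈ lapSet σ).card =
      2 * lapQ σ := by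
  have hunion : ((range (2 * n + 1)).filter fun g => g ∈ lapSet σ ∨ g + 1 ∈ lapSet σ) =
      (lapSet σ).biUnion fun i => ({i - 1, i} : Finset ℕ) := by
    ext g
    simp only [mem_filter, mem_range, mem_biUnion, mem_insert, mem_singleton]
    constructor
    · rintro ⟨-, hg | hg⟩
      · exact ⟨g, hg, Or.inr rfl⟩
      · exact ⟨g + 1, hg, Or.inl rfl⟩
    · rintro ⟨i, hi, rfl | rfl⟩ <;> have := (mem_lapSet.1 hi).one_le_and_lt
      · exact ⟨by omega, Or.inr (by rwa [Nat.sub_add_cancel this.1])⟩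
      · exact ⟨by omega, Or.inl hi⟩
  have hdisj : (lapSet σ : Set ℕ).PairwiseDisjoint fun i => ({i - 1, i} : Finset ℕ) := by
    intro i hi j hj hij
    have hi' := mem_lapSet.1 hi
    have hj' := mem_lapSet.1 hj
    have hij' : j ≠ i + 1 := fun h => hi'.not_isLap_succ (h ▸ hj')
    have hji' : i ≠ j + 1 := fun h => hj'.not_isLap_succ (h ▸ hi')
    have := hi'.one_le_and_lt
    have := hj'.one_le_and_lt
    simp only [Function.onFun, disjoint_insert_left, disjoint_insert_right, mem_insert,
      mem_singleton, disjoint_singleton]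
    omega
  rw [hunion, card_biUnion hdisj, lapQ_eq_card_lapSet, mul_comm, ← smul_eq_mul, ← sum_const]
  refine sum_congr rfl fun i hi => card_pair ?_
  have := (mem_lapSet.1 hi).one_le_and_lt
  omega

lemma lapQ_le {n : ℕ} (σ : Fin (2 * n) → Fin (n + 1)) : lapQ σ ≤ n := by
  have := card_filter_le (range (2 * n + 1)) fun g => g ∈ lapSet σ ∨ g + 1 ∈ lapSet σ
  rw [card_filter_mem_lapSet_or_succ_mem, card_range] at this
  omega

lemma sum_range_lapQ_insertLast {M : Type*} [AddCommMonoid M] {n : ℕ}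
    (σ : Fin (2 * n) → Fin (n + 1)) (F : ℕ → M) :
    ∑ g ∈ range (2 * n + 1), F (lapQ (insertLast σ g)) =
      (2 * n + 1 - 2 * lapQ σ) • F (lapQ σ + 1) + (2 * lapQ σ) • F (lapQ σ) := by
  have hterm : ∀ g ∈ range (2 * n + 1), F (lapQ (insertLast σ g)) =
      if g ∈ lapSet σ ∨ g + 1 ∈ lapSet σ then F (lapQ σ) else F (lapQ σ + 1) := by
    intro g hg
    have := (isInsertion_insertLast σ (Nat.lt_succ_iff.1 (mem_range.1 hg))).lapQ_add_ite
    split_ifs at this ⊢ <;> exact congrArg F (by omega)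
  have hcard := card_filter_add_card_filter_not (s := range (2 * n + 1))
    fun g => g ∈ lapSet σ ∨ g + 1 ∈ lapSet σ
  rw [card_filter_mem_lapSet_or_succ_mem, card_range] at hcard
  rw [sum_congr rfl hterm, sum_ite, sum_const, sum_const, card_filter_mem_lapSet_or_succ_mem,
    add_comm]
  congr 2
  omega

section Derivation

variable {R A : Type*} [CommSemiring R] [CommSemiring A] [Algebra R A] (D : Derivation R A A)
  {y z : A}

lemma Derivation.apply_pow_mul_pow (hy : D y = y * z ^ 2) (hz : D z = y ^ 2 * z) (a b : ℕ) :
    D (y ^ a * z ^ b) = a • (y ^ a * z ^ (b + 2)) + b • (y ^ (a + 2) * z ^ b) := by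
  rw [Derivation.leibniz, Derivation.leibniz_pow, Derivation.leibniz_pow, hy, hz, add_comm]
  rcases a with _ | a <;> rcases b with _ | b <;>
    simp only [Nat.add_sub_cancel, smul_eq_mul, nsmul_eq_mul] <;> ring

theorem Derivation.pow_apply_eq_sum_stirlingSet (hy : D y = y * z ^ 2) (hz : D z = y ^ 2 * z)
    (n : ℕ) :
    (D.toLinearMap ^ n) z =
      ∑ σ ∈ StirlingSet n, y ^ (2 * lapQ σ) * z ^ (2 * n + 1 - 2 * lapQ σ) := by
  induction n with
  | zero => simp [StirlingSet, lapQ]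
  | succ n ih =>
    rw [pow_succ', Module.End.mul_apply, ih, map_sum, sum_stirlingSet_succ]
    refine sum_congr rfl fun σ _ => ?_
    have hk := lapQ_le σ
    rw [sum_range_lapQ_insertLast σ fun k => y ^ (2 * k) * z ^ (2 * (n + 1) + 1 - 2 * k),
      Derivation.coeFn_coe, D.apply_pow_mul_pow hy hz, add_comm]
    congr 4 <;> omega

end Derivation

theorem statement_4_general
    (D : Derivation ℚ (MvPolynomial (Fin 3) ℚ) (MvPolynomial (Fin 3) ℚ))
    (hy : D (X 1) = X 1 * X 2 ^ 2)
    (hz : D (X 2) = X 1 ^ 2 * X 2) (n : ℕ) :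
    (D.toLinearMap ^ n) (X 2) =
      X 2 * ∑ σ ∈ StirlingSet n, X 1 ^ (2 * lapQ σ) * X 2 ^ (2 * n - 2 * lapQ σ) := by
  rw [D.pow_apply_eq_sum_stirlingSet hy hz, mul_sum]
  refine sum_congr rfl fun σ _ => ?_
  rw [show 2 * n + 1 - 2 * lapQ σ = 2 * n - 2 * lapQ σ + 1 by have := lapQ_le σ; omega, pow_succ]
  ring

theorem statement_4
    (D : Derivation ℚ (MvPolynomial (Fin 3) ℚ) (MvPolynomial (Fin 3) ℚ))
    (hx : D (X 0) = X 0 * X 1 * X 2)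
    (hy : D (X 1) = X 1 * X 2 ^ 2)
    (hz : D (X 2) = X 1 ^ 2 * X 2) (n : ℕ) :
    (D.toLinearMap ^ n) (X 2) =
      X 2 * ∑ σ ∈ StirlingSet n, X 1 ^ (2 * lapQ σ) * X 2 ^ (2 * n - 2 * lapQ σ) :=
  statement_4_general D hy hz n
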